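/- Suppose a map h : D ⊆ ℝ² → ℝ² induces chaotic dynamics on m ≥ 2 symbols on D in the sense of the stretching definition, with compact pairwise disjoint sets K_0,…,K_{m−1}. If moreover h is injective and continuous on K := K_0 ∪ … ∪ K_{m−1}, then there is a nonempty compact set Λ ⊆ K with h(Λ) = Λ and a continuous surjection Π : Λ → Σ_m with Π∘h = σ∘Π on Λ. -/

import Mathlib

/-- If `h` induces chaotic dynamics on `m ≥ 2` symbols on `D ⊆ ℝ²` (in the stretching
sense, with pairwise disjoint nonempty compact sets `K_0,…,K_{m−1}`), and `h` is
injective and continuous on `K = K_0 ∪ … ∪ K_{m−1}`, then there is a nonempty compact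
invariant set `Λ ⊆ K` and a continuous surjection `Π : Λ → Σ_m` semiconjugating `h`
to the shift `σ`. -/
theorem semiconjugacy_of_chaotic_dynamics
    (m : ℕ) (hm : 2 ≤ m) (D : Set (ℝ × ℝ)) (h : ℝ × ℝ → ℝ × ℝ)
    (K : Fin m → Set (ℝ × ℝ))
    (hKD : ∀ i, K i ⊆ D)
    (hKne : ∀ i, (K i).Nonempty)
    (hKcpt : ∀ i, IsCompact (K i))
    (hKdisj : ∀ i j, i ≠ j → Disjoint (K i) (K j))
    (hitin : ∀ s : ℤ → Fin m, ∃ w : ℤ → ℝ × ℝ,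
      (∀ i : ℤ, w i ∈ K (s i) ∧ h (w i) = w (i + 1)))
    (hper : ∀ (k : ℕ), 0 < k → ∀ s : ℤ → Fin m, (∀ i : ℤ, s (i + k) = s i) →
      ∃ w : ℤ → ℝ × ℝ, (∀ i : ℤ, w i ∈ K (s i) ∧ h (w i) = w (i + 1)) ∧
        (∀ i : ℤ, w (i + k) = w i))
    (hinj : Set.InjOn h (⋃ i, K i))
    (hcont : ContinuousOn h (⋃ i, K i)) :
    ∃ Λ : Set (ℝ × ℝ), Λ ⊆ (⋃ i, K i) ∧ Λ.Nonempty ∧ IsCompact Λ ∧ h '' Λ = Λ ∧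
      ∃ Pi : (ℝ × ℝ) → (ℤ → Fin m),
        ContinuousOn Pi Λ ∧
        (∀ s : ℤ → Fin m, ∃ p ∈ Λ, Pi p = s) ∧
        (∀ p ∈ Λ, Pi (h p) = fun i => Pi p (i + 1)) := by
  classical
  set U : Set (ℝ × ℝ) := ⋃ i, K i with hUdef
  have hUcpt : IsCompact U := isCompact_iUnion hKcpt
  have hUclosed : IsClosed U := hUcpt.isClosed
  -- Tietze extension of h to a globally continuous map
  obtain ⟨H, hHcont, hHeq⟩ : ∃ H : ℝ × ℝ → ℝ × ℝ, Continuous H ∧ ∀ x ∈ U, H x = h x := by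
    obtain ⟨g, hg⟩ := ContinuousMap.exists_restrict_eq (Y := ℝ × ℝ) hUclosed
      ⟨U.restrict h, continuousOn_iff_continuous_restrict.mp hcont⟩
    exact ⟨g, g.continuous, fun x hx => congrFun (congrArg DFunLike.coe hg) ⟨x, hx⟩⟩
  have hinjH : Set.InjOn H U := fun x hx y hy e =>
    hinj hx hy (by rwa [hHeq x hx, hHeq y hy] at e)
  set Orb : Set (ℤ → ℝ × ℝ) := {w | ∀ i : ℤ, w i ∈ U ∧ H (w i) = w (i + 1)} with hOrbdef
  have hOrbClosed : IsClosed Orb := by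
    have heq : Orb = (⋂ i : ℤ, {w : ℤ → ℝ × ℝ | w i ∈ U}) ∩
        ⋂ i : ℤ, {w : ℤ → ℝ × ℝ | H (w i) = w (i + 1)} := by
      ext w
      simp only [hOrbdef, Set.mem_setOf_eq, Set.mem_inter_iff, Set.mem_iInter, forall_and]
    rw [heq]
    exact (isClosed_iInter fun i => hUclosed.preimage (continuous_apply i)).inter
      (isClosed_iInter fun i =>
        isClosed_eq (hHcont.comp (continuous_apply i)) (continuous_apply (i + 1)))
  have hOrbCpt : IsCompact Orb := by
    refine IsCompact.of_isClosed_subset (isCompact_pi_infinite fun _ : ℤ => hUcpt) hOrbClosed ?_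
    intro w hw i
    exact (hw i).1
  -- uniqueness of orbits through a point
  have huniq : ∀ w ∈ Orb, ∀ w' ∈ Orb, w 0 = w' 0 → w = w' := by
    intro w hw w' hw' h0
    funext i
    induction i using Int.induction_on with
    | zero => exact h0
    | succ n ih => rw [← (hw n).2, ← (hw' n).2, ih]
    | pred n ih =>
      have h1 : H (w (-(n : ℤ) - 1)) = w (-(n : ℤ)) := by
        have := (hw (-(n : ℤ) - 1)).2
        rwa [show (-(n : ℤ) - 1 + 1 : ℤ) = -(n : ℤ) by ring] at this
      have h2 : H (w' (-(n : ℤ) - 1)) = w' (-(n : ℤ)) := by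
        have := (hw' (-(n : ℤ) - 1)).2
        rwa [show (-(n : ℤ) - 1 + 1 : ℤ) = -(n : ℤ) by ring] at this
      exact hinjH (hw (-(n : ℤ) - 1)).1 (hw' (-(n : ℤ) - 1)).1 (by rw [h1, h2, ih])
  -- the symbol map
  set sym : ℝ × ℝ → Fin m := fun x => if hx : ∃ i, x ∈ K i then hx.choose else ⟨0, by omega⟩
    with hsymdef
  have hsymK : ∀ (i : Fin m) (x : ℝ × ℝ), x ∈ K i → sym x = i := by
    intro i x hx
    have hex : ∃ j, x ∈ K j := ⟨i, hx⟩
    simp only [hsymdef, dif_pos hex]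
    by_contra hne
    exact (hKdisj _ _ hne).ne_of_mem hex.choose_spec hx rfl
  have hsymCont : ContinuousOn sym U := by
    intro x hx
    obtain ⟨i, hi⟩ := Set.mem_iUnion.mp hx
    have hVcl : IsClosed (⋃ j ∈ {j : Fin m | j ≠ i}, K j) :=
      Set.Finite.isClosed_biUnion (Set.toFinite _) fun j _ => (hKcpt j).isClosed
    have hxV : x ∈ (⋃ j ∈ {j : Fin m | j ≠ i}, K j)ᶜ := by
      intro hmem
      obtain ⟨j, hj, hxj⟩ := Set.mem_iUnion₂.mp hmem
      exact (hKdisj j i hj).ne_of_mem hxj hi rfl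
    have hev : ∀ᶠ y in nhdsWithin x U, sym y = i := by
      have h1 : ∀ᶠ y in nhdsWithin x U, y ∈ (⋃ j ∈ {j : Fin m | j ≠ i}, K j)ᶜ :=
        Filter.eventually_of_mem (nhdsWithin_le_nhds (hVcl.isOpen_compl.mem_nhds hxV))
          fun y hy => hy
      have h2 : ∀ᶠ y in nhdsWithin x U, y ∈ U := eventually_mem_nhdsWithin
      filter_upwards [h1, h2] with y hy1 hy2
      obtain ⟨j, hj⟩ := Set.mem_iUnion.mp hy2
      have hji : j = i := by
        by_contra hne
        exact hy1 (Set.mem_biUnion hne hj)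
      exact hsymK i y (hji ▸ hj)
    have : ContinuousWithinAt sym U x := by
      rw [ContinuousWithinAt, hsymK i x hi]
      exact tendsto_const_nhds.congr' (hev.mono fun y hy => hy.symm)
    exact this
  set Λ : Set (ℝ × ℝ) := (fun w : ℤ → ℝ × ℝ => w 0) '' Orb with hΛdef
  set O : ℝ × ℝ → (ℤ → ℝ × ℝ) :=
    fun p => if hp : ∃ w, w ∈ Orb ∧ w 0 = p then hp.choose else fun _ => p with hOdef
  have hOspec : ∀ p ∈ Λ, O p ∈ Orb ∧ O p 0 = p := by
    rintro p ⟨w, hw, hw0⟩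
    have hex : ∃ w, w ∈ Orb ∧ w 0 = p := ⟨w, hw, hw0⟩
    simp only [hOdef, dif_pos hex]
    exact ⟨hex.choose_spec.1, hex.choose_spec.2⟩
  have hOeq : ∀ w ∈ Orb, O (w 0) = w := by
    intro w hw
    have hmem : w 0 ∈ Λ := ⟨w, hw, rfl⟩
    exact huniq _ (hOspec _ hmem).1 w hw (hOspec _ hmem).2
  refine ⟨Λ, ?_, ?_, ?_, ?_, fun p i => sym (O p i), ?_, ?_, ?_⟩
  · rintro p ⟨w, hw, rfl⟩
    exact (hw 0).1
  · obtain ⟨w, hw⟩ := hitin fun _ => ⟨0, by omega⟩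
    have hwOrb : w ∈ Orb := fun i =>
      ⟨Set.mem_iUnion.mpr ⟨_, (hw i).1⟩,
        (hHeq _ (Set.mem_iUnion.mpr ⟨_, (hw i).1⟩)).trans (hw i).2⟩
    exact ⟨w 0, w, hwOrb, rfl⟩
  · exact hOrbCpt.image (continuous_apply 0)
  · apply Set.Subset.antisymm
    · rintro q ⟨p, ⟨w, hw, rfl⟩, rfl⟩
      refine ⟨fun i => w (i + 1), fun i => ⟨(hw (i + 1)).1, (hw (i + 1)).2⟩, ?_⟩
      show w (0 + 1) = h (w 0)
      rw [← hHeq _ (hw 0).1, (hw 0).2]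
    · rintro q ⟨w, hw, rfl⟩
      refine ⟨w (-1), ⟨fun i => w (i - 1), fun i => ?_, by norm_num⟩, ?_⟩
      · refine ⟨(hw (i - 1)).1, ?_⟩
        show H (w (i - 1)) = w (i + 1 - 1)
        rw [(hw (i - 1)).2, show (i - 1 + 1 : ℤ) = i + 1 - 1 by ring]
      · show h (w (-1)) = w 0
        rw [← hHeq _ (hw (-1)).1, (hw (-1)).2]
        norm_num
  · -- continuity
    rw [continuousOn_iff_continuous_restrict]
    have hcs : CompactSpace Orb := isCompact_iff_compactSpace.mp hOrbCpt
    let e : Orb → Λ := fun w => ⟨w.1 0, ⟨w.1, w.2, rfl⟩⟩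
    have he_cont : Continuous e :=
      Continuous.subtype_mk ((continuous_apply 0).comp continuous_subtype_val) _
    have he_bij : Function.Bijective e := by
      constructor
      · intro w w' hww'
        exact Subtype.ext (huniq _ w.2 _ w'.2 (congrArg Subtype.val hww'))
      · rintro ⟨p, w, hw, rfl⟩
        exact ⟨⟨w, hw⟩, rfl⟩
    let E := Continuous.homeoOfEquivCompactToT2 (f := Equiv.ofBijective e he_bij) he_cont
    have hkey : Λ.domRestrict (fun p i => sym (O p i)) =
        fun (p : Λ) (i : ℤ) => sym ((E.symm p).1 i) := by
      funext p i
      have h1 : (E.symm p).1 0 = (p : ℝ × ℝ) := congrArg Subtype.val (E.apply_symm_apply p)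
      have h2 : O (p : ℝ × ℝ) = (E.symm p).1 := by
        rw [← h1]
        exact hOeq _ (E.symm p).2
      simp only [Set.domRestrict, Set.restrict, h2]
    rw [hkey]
    refine continuous_pi fun i => ?_
    exact hsymCont.comp_continuous
      ((continuous_apply i).comp (continuous_subtype_val.comp E.symm.continuous))
      (fun p => ((E.symm p).2 i).1)
  · -- surjectivity
    intro s
    obtain ⟨w, hw⟩ := hitin s
    have hwOrb : w ∈ Orb := fun i =>
      ⟨Set.mem_iUnion.mpr ⟨_, (hw i).1⟩,
        (hHeq _ (Set.mem_iUnion.mpr ⟨_, (hw i).1⟩)).trans (hw i).2⟩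
    refine ⟨w 0, ⟨w, hwOrb, rfl⟩, ?_⟩
    funext i
    show sym (O (w 0) i) = s i
    rw [hOeq w hwOrb]
    exact hsymK _ _ (hw i).1
  · -- semiconjugacy
    rintro p ⟨w, hw, rfl⟩
    have hsh : (fun i => w (i + 1)) ∈ Orb := fun i => ⟨(hw (i + 1)).1, (hw (i + 1)).2⟩
    have hhp : h (w 0) = w (0 + 1) := by
      rw [← hHeq _ (hw 0).1, (hw 0).2]
    have hOsh : O (h (w 0)) = fun i => w (i + 1) := by
      rw [hhp]
      exact hOeq _ hsh
    funext i
    show sym (O (h (w 0)) i) = sym (O (w 0) (i + 1))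
    rw [hOsh, hOeq w hw]
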